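/- Every classical morphism between classical structures is real: if f : X ⟶ Y is classical then f_* = f, where f_* is the conjugate of f. -/

import Mathlib

open CategoryTheory MonoidalCategory

universe v u

variable {C : Type u} [Category.{v} C] [MonoidalCategory C] [SymmetricCategory C]

/-- A dagger structure on a symmetric monoidal category: an involutive,
identity-on-objects, contravariant functor that coherently preserves the
symmetric monoidal structure. -/
structure Dagger (C : Type u) [Category.{v} C] [MonoidalCategory C]
    [SymmetricCategory C] where
  dag : ∀ {A B : C}, (A ⟶ B) → (B ⟶ A)
  dag_comp : ∀ {A B E : C} (f : A ⟶ B) (g : B ⟶ E), dag (f ≫ g) = dag g ≫ dag f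
  dag_id : ∀ A : C, dag (𝟙 A) = 𝟙 A
  dag_dag : ∀ {A B : C} (f : A ⟶ B), dag (dag f) = f
  dag_tensor : ∀ {A B A' B' : C} (f : A ⟶ B) (g : A' ⟶ B'),
    dag (f ⊗ₘ g) = dag f ⊗ₘ dag g
  dag_assoc : ∀ A B E : C, dag (α_ A B E).hom = (α_ A B E).inv
  dag_lUnit : ∀ A : C, dag (λ_ A).hom = (λ_ A).inv
  dag_rUnit : ∀ A : C, dag (ρ_ A).hom = (ρ_ A).inv
  dag_braid : ∀ A B : C, dag (β_ A B).hom = (β_ A B).inv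

/-- Positivity of an endomorphism: `e = g† ≫ g` for some `g : W ⟶ A`. -/
def Dagger.IsPositive (D : Dagger C) {A : C} (e : A ⟶ A) : Prop :=
  ∃ (W : C) (g : W ⟶ A), e = D.dag g ≫ g

/-- A classical structure: a commutative monoid object which, together with the
daggers of its multiplication and unit, is a special Frobenius algebra. -/
structure ClassicalStructure (D : Dagger C) (X : C) where
  mul : X ⊗ X ⟶ X
  unit : 𝟙_ C ⟶ X
  mul_assoc' : (α_ X X X).hom ≫ (𝟙 X ⊗ₘ mul) ≫ mul = (mul ⊗ₘ 𝟙 X) ≫ mul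
  one_mul' : (unit ⊗ₘ 𝟙 X) ≫ mul = (λ_ X).hom
  mul_one' : (𝟙 X ⊗ₘ unit) ≫ mul = (ρ_ X).hom
  mul_comm' : (β_ X X).hom ≫ mul = mul
  frobenius' : (𝟙 X ⊗ₘ D.dag mul) ≫ (α_ X X X).inv ≫ (mul ⊗ₘ 𝟙 X) = mul ≫ D.dag mul
  special' : D.dag mul ≫ mul = 𝟙 X

namespace ClassicalStructure

variable {D : Dagger C}

/-- The comultiplication `Δ := ∇†`. -/
def comul {X : C} (S : ClassicalStructure D X) : X ⟶ X ⊗ X := D.dag S.mul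

/-- The counit `⊤ := ⊥†`. -/
def counit {X : C} (S : ClassicalStructure D X) : X ⟶ 𝟙_ C := D.dag S.unit

/-- The induced Bell state `η := ⊥ ≫ Δ`. -/
def eta {X : C} (S : ClassicalStructure D X) : 𝟙_ C ⟶ X ⊗ X := S.unit ≫ S.comul

/-- The induced Bell costate `ε := ∇ ≫ ⊤`. -/
def eps {X : C} (S : ClassicalStructure D X) : X ⊗ X ⟶ 𝟙_ C := S.mul ≫ S.counit

/-- The decoherence `Ξ := ∇ ≫ Δ`. -/
def Xi {X : C} (S : ClassicalStructure D X) : X ⊗ X ⟶ X ⊗ X := S.mul ≫ S.comul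

end ClassicalStructure

/-- A morphism `f : X ⟶ Y` between classical structures is classical if
`(Δ_X ⊗ 𝟙_Y) ≫ (𝟙_X ⊗ f ⊗ 𝟙_Y) ≫ (𝟙_X ⊗ ∇_Y)` is positive. -/
def IsClassical {X Y : C} (D : Dagger C) (XS : ClassicalStructure D X)
    (YS : ClassicalStructure D Y) (f : X ⟶ Y) : Prop :=
  D.IsPositive ((XS.comul ⊗ₘ 𝟙 Y) ≫ ((𝟙 X ⊗ₘ f) ⊗ₘ 𝟙 Y) ≫ (α_ X Y Y).hom ≫ (𝟙 X ⊗ₘ YS.mul))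

/-- The conjugate `f_* := (η_Y ⊗ 𝟙_X) ≫ (𝟙_Y ⊗ f† ⊗ 𝟙_X) ≫ (𝟙_Y ⊗ ε_X)`. -/
def conjugate {X Y : C} (D : Dagger C) (XS : ClassicalStructure D X)
    (YS : ClassicalStructure D Y) (f : X ⟶ Y) : X ⟶ Y :=
  (λ_ X).inv ≫ (YS.eta ⊗ₘ 𝟙 X) ≫ (α_ Y Y X).hom ≫ (𝟙 Y ⊗ₘ (D.dag f ⊗ₘ 𝟙 X)) ≫
    (𝟙 Y ⊗ₘ XS.eps) ≫ (ρ_ Y).hom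

/-- The convolution `f ⋆ g := Δ_X ≫ (f_* ⊗ g) ≫ ∇_Y`. -/
def convol {X Y : C} (D : Dagger C) (XS : ClassicalStructure D X)
    (YS : ClassicalStructure D Y) (f g : X ⟶ Y) : X ⟶ Y :=
  XS.comul ≫ (conjugate D XS YS f ⊗ₘ g) ≫ YS.mul

/-- A relation is a convolution-idempotent: `r = r ⋆ r`. -/
def IsRelation {X Y : C} (D : Dagger C) (XS : ClassicalStructure D X)
    (YS : ClassicalStructure D Y) (r : X ⟶ Y) : Prop :=
  r = convol D XS YS r r

/-- Single-valuedness: `r ≫ Δ_Y = Δ_X ≫ (r ⊗ r)`. -/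
def SingleValued {X Y : C} (D : Dagger C) (XS : ClassicalStructure D X)
    (YS : ClassicalStructure D Y) (r : X ⟶ Y) : Prop :=
  r ≫ YS.comul = XS.comul ≫ (r ⊗ₘ r)

/-- Totality: `r ≫ ⊤_Y = ⊤_X`. -/
def TotalRel {X Y : C} (D : Dagger C) (XS : ClassicalStructure D X)
    (YS : ClassicalStructure D Y) (r : X ⟶ Y) : Prop :=
  r ≫ YS.counit = XS.counit

/-- A function is a single-valued total relation. -/
def IsFunctionRel {X Y : C} (D : Dagger C) (XS : ClassicalStructure D X)
    (YS : ClassicalStructure D Y) (r : X ⟶ Y) : Prop :=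
  IsRelation D XS YS r ∧ SingleValued D XS YS r ∧ TotalRel D XS YS r

/-- The middle-four interchange `(X ⊗ Y) ⊗ (Z ⊗ W) ⟶ (X ⊗ Z) ⊗ (Y ⊗ W)`
built from associators and the braiding. -/
def midSwap (X Y Z W : C) : (X ⊗ Y) ⊗ (Z ⊗ W) ⟶ (X ⊗ Z) ⊗ (Y ⊗ W) :=
  (α_ X Y (Z ⊗ W)).hom ≫ (𝟙 X ⊗ₘ (α_ Y Z W).inv) ≫ (𝟙 X ⊗ₘ ((β_ Y Z).hom ⊗ₘ 𝟙 W)) ≫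
    (𝟙 X ⊗ₘ (α_ Z Y W).hom) ≫ (α_ X Z (Y ⊗ W)).inv

/-- The multiplication `∇_{X⊗Y} := (𝟙_X ⊗ β_{Y,X} ⊗ 𝟙_Y) ≫ (∇_X ⊗ ∇_Y)` of the
tensor of two classical structures. -/
def tensorMul {X Y : C} {D : Dagger C} (XS : ClassicalStructure D X)
    (YS : ClassicalStructure D Y) : (X ⊗ Y) ⊗ (X ⊗ Y) ⟶ X ⊗ Y :=
  midSwap X Y X Y ≫ (XS.mul ⊗ₘ YS.mul)

/-- The unit `⊥_{X⊗Y} := ⊥_X ⊗ ⊥_Y` of the tensor of two classical structures. -/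
def tensorUnit'' {X Y : C} {D : Dagger C} (XS : ClassicalStructure D X)
    (YS : ClassicalStructure D Y) : 𝟙_ C ⟶ X ⊗ Y :=
  (λ_ (𝟙_ C)).inv ≫ (XS.unit ⊗ₘ YS.unit)

/-- Complete positivity of `g : X ⊗ X ⟶ Y ⊗ Y` relative to the self-dual compact
structures induced by the classical structures:
`(𝟙_X ⊗ η_X ⊗ 𝟙_Y) ≫ (𝟙_X ⊗ g ⊗ 𝟙_Y) ≫ (𝟙_{X⊗Y} ⊗ ε_Y)` is positive. -/
def IsCP {X Y : C} (D : Dagger C) (XS : ClassicalStructure D X)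
    (YS : ClassicalStructure D Y) (g : X ⊗ X ⟶ Y ⊗ Y) : Prop :=
  D.IsPositive ((𝟙 X ⊗ₘ (λ_ Y).inv) ≫ (𝟙 X ⊗ₘ (XS.eta ⊗ₘ 𝟙 Y)) ≫ (𝟙 X ⊗ₘ (g ⊗ₘ 𝟙 Y)) ≫
    (𝟙 X ⊗ₘ (α_ Y Y Y).hom) ≫ (α_ X Y (Y ⊗ Y)).inv ≫ (𝟙 (X ⊗ Y) ⊗ₘ YS.eps) ≫
    (ρ_ (X ⊗ Y)).hom)

/-- A stochastic morphism: classical and total. -/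
def Stochastic {X Y : C} (D : Dagger C) (XS : ClassicalStructure D X)
    (YS : ClassicalStructure D Y) (s : X ⟶ Y) : Prop :=
  IsClassical D XS YS s ∧ TotalRel D XS YS s

/-- A doubly stochastic morphism: both `s` and `s†` are stochastic. -/
def DoublyStochastic {X Y : C} (D : Dagger C) (XS : ClassicalStructure D X)
    (YS : ClassicalStructure D Y) (s : X ⟶ Y) : Prop :=
  Stochastic D XS YS s ∧ Stochastic D YS XS (D.dag s)

/-! A positive endomorphism is self-adjoint, so the endomorphism `graphEnd XS YS f` whose
positivity makes `f` classical equals its dagger. Feeding `⊥_Y` into its `Y` input and applying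
`⊤_X` to its `X` output gives back `f` by the unit laws; doing the same to the dagger gives the
cup–cap expression that defines `f_*`, once the cup is moved to the other side; this is possible
because commutativity makes `η_Y` and `ε_X` invariant under the braiding. -/

section Braided

variable {B : Type u} [Category.{v} B] [MonoidalCategory B] [BraidedCategory B]

lemma whiskerLeft_cup_eq_whiskerRight_cup {X Y : B} (η : 𝟙_ B ⟶ Y ⊗ Y)
    (hη : η ≫ (β_ Y Y).hom = η) (h : X ⊗ Y ⟶ 𝟙_ B) :
    (ρ_ X).inv ≫ X ◁ η ≫ (α_ X Y Y).inv ≫ h ▷ Y ≫ (λ_ Y).hom =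
      (λ_ X).inv ≫ η ▷ X ≫ (α_ Y Y X).hom ≫ Y ◁ ((β_ Y X).hom ≫ h) ≫ (ρ_ Y).hom := by
  have hcup : (ρ_ X).inv ≫ X ◁ η = (λ_ X).inv ≫ η ▷ X ≫ (β_ (Y ⊗ Y) X).hom := by
    rw [BraidedCategory.braiding_naturality_left, leftUnitor_inv_braiding_assoc]
  have hswap : η ▷ X ≫ (α_ Y Y X).hom ≫ Y ◁ (β_ Y X).hom ≫ (α_ Y X Y).inv =
      η ▷ X ≫ (α_ Y Y X).hom ≫ (β_ Y (Y ⊗ X)).hom := by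
    conv_lhs => rw [← hη]
    simp
  have hρ : (β_ Y (Y ⊗ X)).hom ≫ ((β_ Y X).hom ≫ h) ▷ Y ≫ (λ_ Y).hom =
      Y ◁ ((β_ Y X).hom ≫ h) ≫ (ρ_ Y).hom := by
    rw [← BraidedCategory.braiding_naturality_right_assoc, braiding_leftUnitor]
  rw [reassoc_of% hcup, BraidedCategory.braiding_tensor_left_hom]
  simp only [Category.assoc, Iso.hom_inv_id_assoc, reassoc_of% hswap, ← comp_whiskerRight_assoc,
    hρ]

end Braided

section Real

variable {D : Dagger C}

namespace Dagger

lemma dag_whiskerRight {A B : C} (f : A ⟶ B) (Z : C) : D.dag (f ▷ Z) = D.dag f ▷ Z := by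
  rw [← tensorHom_id, D.dag_tensor, D.dag_id, tensorHom_id]

lemma dag_whiskerLeft (Z : C) {A B : C} (f : A ⟶ B) : D.dag (Z ◁ f) = Z ◁ D.dag f := by
  rw [← id_tensorHom, D.dag_tensor, D.dag_id, id_tensorHom]

lemma IsPositive.dag_eq {A : C} {e : A ⟶ A} (h : D.IsPositive e) : D.dag e = e := by
  obtain ⟨W, g, rfl⟩ := h
  rw [D.dag_comp, D.dag_dag]

end Dagger

namespace ClassicalStructure

variable {X : C} (S : ClassicalStructure D X)

lemma whiskerLeft_unit_mul : X ◁ S.unit ≫ S.mul = (ρ_ X).hom := by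
  simpa only [id_tensorHom] using S.mul_one'

lemma comul_counit_whiskerRight : S.comul ≫ S.counit ▷ X = (λ_ X).inv := by
  simpa only [D.dag_comp, D.dag_lUnit, tensorHom_id, D.dag_whiskerRight, comul, counit] using
    congrArg D.dag S.one_mul'

lemma eta_braiding : S.eta ≫ (β_ X X).hom = S.eta := by
  have h := congrArg D.dag S.mul_comm'
  rw [D.dag_comp, D.dag_braid, ← SymmetricCategory.braiding_swap_eq_inv_braiding] at h
  rw [eta, Category.assoc, comul, h]

lemma braiding_eps : (β_ X X).hom ≫ S.eps = S.eps := by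
  rw [eps, ← Category.assoc, S.mul_comm']

end ClassicalStructure

def graphEnd {X Y : C} (XS : ClassicalStructure D X) (YS : ClassicalStructure D Y)
    (f : X ⟶ Y) : X ⊗ Y ⟶ X ⊗ Y :=
  XS.comul ▷ Y ≫ (X ◁ f) ▷ Y ≫ (α_ X Y Y).hom ≫ X ◁ YS.mul

lemma isClassical_iff {X Y : C} (XS : ClassicalStructure D X) (YS : ClassicalStructure D Y)
    (f : X ⟶ Y) : IsClassical D XS YS f ↔ D.IsPositive (graphEnd XS YS f) := by
  simp only [IsClassical, graphEnd, id_tensorHom, tensorHom_id]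

section Graph

variable {X Y : C} (XS : ClassicalStructure D X) (YS : ClassicalStructure D Y) (f : X ⟶ Y)

lemma dag_graphEnd : D.dag (graphEnd XS YS f) =
    X ◁ YS.comul ≫ (α_ X Y Y).inv ≫ (X ◁ D.dag f) ▷ Y ≫ XS.mul ▷ Y := by
  simp only [graphEnd, D.dag_comp, D.dag_whiskerLeft, D.dag_whiskerRight, D.dag_assoc,
    ClassicalStructure.comul, D.dag_dag, Category.assoc]

lemma cap_graphEnd :
    (ρ_ X).inv ≫ X ◁ YS.unit ≫ graphEnd XS YS f ≫ XS.counit ▷ Y ≫ (λ_ Y).hom = f := by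
  calc _ = (ρ_ X).inv ≫ (XS.comul ≫ X ◁ f) ▷ 𝟙_ C ≫ (ρ_ (X ⊗ Y)).hom ≫ XS.counit ▷ Y ≫
        (λ_ Y).hom := by
        simp only [graphEnd, Category.assoc]
        rw [whisker_exchange_assoc, comp_whiskerRight_assoc, whisker_exchange_assoc,
          associator_naturality_right_assoc, ← whiskerLeft_comp_assoc, YS.whiskerLeft_unit_mul,
          rightUnitor_tensor_hom]
        simp only [Category.assoc]
    _ = XS.comul ≫ XS.counit ▷ X ≫ 𝟙_ C ◁ f ≫ (λ_ Y).hom := by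
        rw [← rightUnitor_inv_naturality_assoc, Iso.inv_hom_id_assoc, Category.assoc,
          ← whisker_exchange_assoc]
    _ = f := by
        rw [reassoc_of% XS.comul_counit_whiskerRight, leftUnitor_naturality, Iso.inv_hom_id_assoc]

lemma cap_dag_graphEnd :
    (ρ_ X).inv ≫ X ◁ YS.unit ≫ D.dag (graphEnd XS YS f) ≫ XS.counit ▷ Y ≫ (λ_ Y).hom =
      conjugate D XS YS f := by
  have heps : (β_ Y X).hom ≫ X ◁ D.dag f ≫ XS.eps = D.dag f ▷ X ≫ XS.eps := by
    rw [← BraidedCategory.braiding_naturality_left_assoc, XS.braiding_eps]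
  calc _ = (ρ_ X).inv ≫ X ◁ YS.eta ≫ (α_ X Y Y).inv ≫ (X ◁ D.dag f ≫ XS.eps) ▷ Y ≫
        (λ_ Y).hom := by
        simp only [dag_graphEnd, ClassicalStructure.eta, ClassicalStructure.eps,
          whiskerLeft_comp, comp_whiskerRight, Category.assoc]
    _ = conjugate D XS YS f := by
        rw [whiskerLeft_cup_eq_whiskerRight_cup _ YS.eta_braiding, heps, conjugate]
        simp only [id_tensorHom, tensorHom_id, whiskerLeft_comp, Category.assoc]

end Graph

end Real

/-- every classical morphism is real: `f_* = f`. -/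
theorem classical_is_real {X Y : C} (D : Dagger C)
    (XS : ClassicalStructure D X) (YS : ClassicalStructure D Y)
    (f : X ⟶ Y) (hf : IsClassical D XS YS f) :
    conjugate D XS YS f = f := by
  rw [← cap_dag_graphEnd, ((isClassical_iff XS YS f).mp hf).dag_eq, cap_graphEnd]
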